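/- Let -1 < s < 1. There exists a constant C = C(s) > 0 such that for every real κ ≥ 1 and every ξ ∈ ℝ, (1 + ξ²)^s ≤ C [ (1 + ξ²)^{-1} + κ² ∑_{k=1}^∞ 2^{2sk} w(ξ; κ 2^k) ]. -/

import Mathlib

/-!
Write `X = 1 + ξ²`. The factor `κ²` is absorbed by the scale `m = κ 2ⁿ`: the `n`-th term equals
`(4ⁿ)^(s-1) · m² w(ξ; m)`, and `m² w(ξ; m)` is at most `ξ²` always and at least `3ξ²/160` once
`ξ² ≤ 4m²`. The upper bound makes the series geometric with ratio `4^(s-1) < 1`. For the lower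
bound pick `n ≥ 1` with `X ≤ 4ⁿ ≤ 4X`; that single term is `≳ ξ² X^(s-1)`, which is `≳ X^s` when
`ξ² ≥ 1`, while for `ξ² ≤ 1` the term `X⁻¹` alone dominates `X^s ≤ 2`.
-/

open Real

/-- The multiplier `w(ξ; m) = 3m²ξ² / (4(ξ² + m²)(ξ² + 4m²))`. -/
noncomputable def w (ξ m : ℝ) : ℝ :=
  3 * m ^ 2 * ξ ^ 2 / (4 * (ξ ^ 2 + m ^ 2) * (ξ ^ 2 + 4 * m ^ 2))

lemma w_nonneg (ξ m : ℝ) : 0 ≤ w ξ m := by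
  unfold w; positivity

lemma sq_mul_w_le (ξ m : ℝ) : m ^ 2 * w ξ m ≤ ξ ^ 2 := by
  rw [w, mul_div_assoc', ← mul_assoc]
  apply div_le_of_le_mul₀ (by positivity) (sq_nonneg ξ)
  nlinarith [sq_nonneg ξ, sq_nonneg m, mul_nonneg (sq_nonneg ξ) (sq_nonneg (ξ * m)),
    mul_nonneg (sq_nonneg ξ) (sq_nonneg (ξ ^ 2)), mul_nonneg (sq_nonneg ξ) (sq_nonneg (m ^ 2))]

lemma le_sq_mul_w {ξ m : ℝ} (hm : 0 < m) (h : ξ ^ 2 ≤ 4 * m ^ 2) :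
    3 * ξ ^ 2 / 160 ≤ m ^ 2 * w ξ m := by
  rw [w, mul_div_assoc', div_le_div_iff₀ (by norm_num) (by positivity)]
  nlinarith [mul_nonneg (mul_nonneg (sq_nonneg ξ) (by positivity : (0:ℝ) ≤ ξ ^ 2 + 9 * m ^ 2))
    (by linarith : (0:ℝ) ≤ 4 * m ^ 2 - ξ ^ 2), sq_nonneg m]

lemma two_pow_rpow_two_mul (s : ℝ) (n : ℕ) :
    ((2 : ℝ) ^ n) ^ (2 * s) = ((4 : ℝ) ^ (s - 1)) ^ n * 4 ^ n := by
  rw [← mul_pow, ← rpow_add_one (by norm_num), sub_add_cancel, ← rpow_pow_comm (by norm_num),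
    rpow_mul (by norm_num)]
  norm_num

lemma sq_mul_dyadic_term (s κ ξ : ℝ) (n : ℕ) :
    κ ^ 2 * (((2 : ℝ) ^ n) ^ (2 * s) * w ξ (κ * 2 ^ n)) =
      ((4 : ℝ) ^ (s - 1)) ^ n * ((κ * 2 ^ n) ^ 2 * w ξ (κ * 2 ^ n)) := by
  rw [two_pow_rpow_two_mul, mul_pow, pow_right_comm, show ((2 : ℝ) ^ 2) = 4 by norm_num]
  ring

lemma summable_dyadic_term {s : ℝ} (hs : s < 1) {κ : ℝ} (hκ : κ ≠ 0) (ξ : ℝ) :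
    Summable fun k : ℕ => ((2 : ℝ) ^ (k + 1)) ^ (2 * s) * w ξ (κ * 2 ^ (k + 1)) := by
  have hr0 : (0 : ℝ) ≤ 4 ^ (s - 1) := by positivity
  have hr1 : (4 : ℝ) ^ (s - 1) < 1 := rpow_lt_one_of_one_lt_of_neg (by norm_num) (by linarith)
  rw [← summable_mul_left_iff (pow_ne_zero 2 hκ)]
  simp_rw [sq_mul_dyadic_term]
  refine Summable.of_nonneg_of_le (fun k => by have := w_nonneg ξ (κ * 2 ^ (k + 1)); positivity)
    (fun k => mul_le_mul_of_nonneg_left (sq_mul_w_le ξ _) (pow_nonneg hr0 _))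
    ((summable_nat_add_iff 1).mpr (summable_geometric_of_lt_one hr0 hr1) |>.mul_right (ξ ^ 2))

lemma exists_le_dyadic_term {s : ℝ} (hs₁ : -1 < s) (hs₂ : s < 1) {κ : ℝ} (hκ : 1 ≤ κ) (ξ : ℝ) :
    ∃ k : ℕ, 3 * ξ ^ 2 * (1 + ξ ^ 2) ^ (s - 1) ≤
      2560 * (κ ^ 2 * (((2 : ℝ) ^ (k + 1)) ^ (2 * s) * w ξ (κ * 2 ^ (k + 1)))) := by
  set X := 1 + ξ ^ 2
  have hX1 : 1 ≤ X := le_add_of_nonneg_right (sq_nonneg ξ)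
  obtain ⟨k, hlo, hhi⟩ := exists_nat_pow_near hX1 (by norm_num : (1 : ℝ) < 4)
  refine ⟨k, ?_⟩
  rw [sq_mul_dyadic_term]
  have hm : (κ * 2 ^ (k + 1)) ^ 2 = κ ^ 2 * 4 ^ (k + 1) := by
    rw [mul_pow, pow_right_comm]; norm_num
  have hξm : ξ ^ 2 ≤ 4 * (κ * 2 ^ (k + 1)) ^ 2 := by
    have : (4 : ℝ) ^ (k + 1) ≤ κ ^ 2 * 4 ^ (k + 1) :=
      le_mul_of_one_le_left (by positivity) (one_le_pow₀ hκ)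
    rw [hm]; linarith
  have hw := le_sq_mul_w (by positivity) hξm
  have h16 : (1 : ℝ) / 16 ≤ 4 ^ (s - 1) := by
    calc (1 : ℝ) / 16 = 4 ^ ((-2 : ℤ) : ℝ) := by rw [rpow_intCast]; norm_num
      _ ≤ 4 ^ (s - 1) := rpow_le_rpow_of_exponent_le (by norm_num) (by push_cast; linarith)
  have hpow : X ^ (s - 1) / 16 ≤ ((4 : ℝ) ^ (s - 1)) ^ (k + 1) := by
    calc X ^ (s - 1) / 16 ≤ 4 ^ (s - 1) * X ^ (s - 1) := by
          nlinarith [rpow_nonneg (by positivity : 0 ≤ X) (s - 1)]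
      _ = (4 * X) ^ (s - 1) := (mul_rpow (by norm_num) (by positivity)).symm
      _ ≤ ((4 : ℝ) ^ (k + 1)) ^ (s - 1) :=
          rpow_le_rpow_of_nonpos (by positivity) (by rw [pow_succ]; linarith) (by linarith)
      _ = ((4 : ℝ) ^ (s - 1)) ^ (k + 1) := (rpow_pow_comm (by norm_num) _ _).symm
  linarith [mul_le_mul hpow hw (by positivity) (by positivity)]

/-- Let `-1 < s < 1`. There exists `C = C(s) > 0` such that for every
real `κ ≥ 1` and every `ξ ∈ ℝ`,
`(1 + ξ²)^s ≤ C [(1 + ξ²)^{-1} + κ² ∑_{k=1}^∞ 2^{2sk} w(ξ; κ 2^k)]`. -/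
theorem stmt_10 (s : ℝ) (hs₁ : -1 < s) (hs₂ : s < 1) :
    ∃ C : ℝ, 0 < C ∧ ∀ κ : ℝ, 1 ≤ κ → ∀ ξ : ℝ,
      (1 + ξ ^ 2) ^ s ≤ C * ((1 + ξ ^ 2)⁻¹ +
        κ ^ 2 * ∑' k : ℕ, ((2 : ℝ) ^ (k + 1)) ^ (2 * s) * w ξ (κ * 2 ^ (k + 1))) := by
  refine ⟨2000, by norm_num, fun κ hκ ξ => ?_⟩
  have hX : (0 : ℝ) < 1 + ξ ^ 2 := by positivity
  have hterm : ∀ k : ℕ, 0 ≤ ((2 : ℝ) ^ (k + 1)) ^ (2 * s) * w ξ (κ * 2 ^ (k + 1)) :=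
    fun k => mul_nonneg (by positivity) (w_nonneg _ _)
  rcases le_total (ξ ^ 2) 1 with hξ | hξ
  · have hXs : (1 + ξ ^ 2) ^ s ≤ 2 :=
      calc (1 + ξ ^ 2) ^ s ≤ (1 + ξ ^ 2) ^ (1 : ℝ) :=
            rpow_le_rpow_of_exponent_le (by linarith [sq_nonneg ξ]) hs₂.le
        _ ≤ 2 := by rw [rpow_one]; linarith
    have : (2 : ℝ)⁻¹ ≤ (1 + ξ ^ 2)⁻¹ := inv_anti₀ hX (by linarith)
    have hsum : 0 ≤ κ ^ 2 * ∑' k : ℕ, ((2 : ℝ) ^ (k + 1)) ^ (2 * s) * w ξ (κ * 2 ^ (k + 1)) :=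
      mul_nonneg (sq_nonneg κ) (tsum_nonneg hterm)
    linarith
  · obtain ⟨k, hk⟩ := exists_le_dyadic_term hs₁ hs₂ hκ ξ
    have hle_tsum := mul_le_mul_of_nonneg_left
      ((summable_dyadic_term hs₂ (by positivity) ξ).le_tsum k (fun j _ => hterm j)) (sq_nonneg κ)
    have hk0 := mul_nonneg (sq_nonneg κ) (hterm k)
    have hinv : 0 ≤ (1 + ξ ^ 2)⁻¹ := inv_nonneg.mpr hX.le
    calc (1 + ξ ^ 2) ^ s = (1 + ξ ^ 2) * (1 + ξ ^ 2) ^ (s - 1) := by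
          rw [rpow_sub_one hX.ne', mul_div_cancel₀ _ hX.ne']
      _ ≤ 2 * ξ ^ 2 * (1 + ξ ^ 2) ^ (s - 1) := by gcongr; linarith
      _ ≤ 2000 * (κ ^ 2 * (((2 : ℝ) ^ (k + 1)) ^ (2 * s) * w ξ (κ * 2 ^ (k + 1)))) := by linarith
      _ ≤ _ := by gcongr; linarith
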